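/- Let 1 < p < ∞ and let M, N be infinite sets of positive integers with ΓL₁(M, N) = C < ∞. Then for every k and all scalars α₁,…,α_k, ‖Σ_{j=1}^k αⱼ e_{nⱼ}‖_{B_p} ≤ C · ‖Σ_{j=1}^k αⱼ e_{mⱼ}‖_{B_p}, where M = {m₁ < m₂ < ⋯} and N = {n₁ < n₂ < ⋯} are the increasing enumerations; i.e., (e_m)_{m∈M} C-dominates (e_n)_{n∈N} in the Baernstein norm. -/

import Mathlib

open Finset Filter

/-- A Schreier set: a finite set of naturals whose cardinality is at most its minimum
(elements are automatically positive when nonempty). -/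
def IsSchreier (F : Finset ℕ) : Prop := ∀ h : F.Nonempty, F.card ≤ F.min' h

/-- A maximal Schreier set: nonempty with cardinality equal to its minimum. -/
def IsMaxSchreier (F : Finset ℕ) : Prop := ∃ h : F.Nonempty, F.card = F.min' h

/-- A (possibly empty) list of nonempty successive Schreier sets. -/
def SchreierChainList (C : List (Finset ℕ)) : Prop :=
  (∀ F ∈ C, IsSchreier F ∧ F.Nonempty) ∧
  C.Chain' (fun F G => ∀ a ∈ F, ∀ b ∈ G, a < b)

/-- A Schreier chain: a nonempty finite list of nonempty successive Schreier sets. -/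
def IsSchreierChain (C : List (Finset ℕ)) : Prop := C ≠ [] ∧ SchreierChainList C

def chainUnion (C : List (Finset ℕ)) : Finset ℕ := C.foldr (· ∪ ·) ∅

noncomputable def mu (p : ℝ) (x : ℕ → ℝ) (F : Finset ℕ) : ℝ :=
  (∑ n ∈ F, |x n| ^ p) ^ (1 / p)

/-- The p-th Schreier norm of a (finitely supported) sequence. -/
noncomputable def schreierNorm (p : ℝ) (x : ℕ → ℝ) : ℝ :=
  sSup {r | ∃ F : Finset ℕ, IsSchreier F ∧ F.Nonempty ∧ r = mu p x F}

noncomputable def betaNorm (p : ℝ) (x : ℕ → ℝ) (C : List (Finset ℕ)) : ℝ :=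
  ((C.map fun F => (∑ n ∈ F, |x n|) ^ p).sum) ^ (1 / p)

/-- The p-th Baernstein norm of a (finitely supported) sequence. -/
noncomputable def baernsteinNorm (p : ℝ) (x : ℕ → ℝ) : ℝ :=
  sSup {r | ∃ C : List (Finset ℕ), IsSchreierChain C ∧ r = betaNorm p x C}

/-- The Schreier covering number of a finite set. -/
noncomputable def tau1 (A : Finset ℕ) : ℕ :=
  sInf {m | ∃ C : List (Finset ℕ), SchreierChainList C ∧ C.length = m ∧ A ⊆ chainUnion C}

/-- Increasing enumeration of a set of naturals (0-indexed). -/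
noncomputable def enumSet (M : Set ℕ) : ℕ → ℕ := Nat.nth (· ∈ M)

/-- `M(J)`: the image of an index set `J` under the increasing enumeration of `M`. -/
noncomputable def subImage (M : Set ℕ) (J : Finset ℕ) : Finset ℕ := J.image (enumSet M)

/-- The Gasparis–Leung index `ΓL₁(M, N) ∈ ℕ ∪ {∞}`. -/
noncomputable def GLindex (M N : Set ℕ) : ℕ∞ :=
  ⨆ J ∈ {J : Finset ℕ | IsSchreier (subImage N J)}, (tau1 (subImage M J) : ℕ∞)

/-!
Let `x = ∑ αⱼ e_{nⱼ}` and `y = ∑ αⱼ e_{mⱼ}`. A set `F` of a Schreier chain carries the same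
`ℓ₁`-mass of `x` as `M(J)` does of `y`, where `J` indexes the `nⱼ ∈ F`. Since `N(J) ⊆ F` is
Schreier, `M(J)` is covered by at most `C` successive Schreier sets, and
`(a₁ + ⋯ + a_C)^p ≤ C^p (a₁^p + ⋯ + a_C^p)`. The pieces obtained for the successive sets of the
chain are again successive, because both enumerations are increasing, so together they form a
Schreier chain witnessing `‖x‖ ≤ C ‖y‖`.
-/

def Successive (F G : Finset ℕ) : Prop := ∀ a ∈ F, ∀ b ∈ G, a < b

theorem Successive.mono {F G F' G' : Finset ℕ} (h : Successive F G) (hF : F' ⊆ F)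
    (hG : G' ⊆ G) : Successive F' G' :=
  fun a ha b hb => h a (hF ha) b (hG hb)

theorem IsSchreier.mono {E F : Finset ℕ} (hF : IsSchreier F) (hEF : E ⊆ F) : IsSchreier E :=
  fun hE => (card_le_card hEF).trans
    ((hF (hE.mono hEF)).trans (min'_le F _ (hEF (min'_mem E hE))))

/-- Successiveness is only transitive through a nonempty middle set, which the chain provides. -/
theorem SchreierChainList.pairwise {C : List (Finset ℕ)} (hC : SchreierChainList C) :
    C.Pairwise Successive := by
  let R : Finset ℕ → Finset ℕ → Prop := fun F G => F.Nonempty ∧ Successive F G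
  have : Trans R R R := ⟨fun ⟨hF, hFG⟩ ⟨⟨b, hb⟩, hGH⟩ =>
    ⟨hF, fun a ha c hc => (hFG a ha b hb).trans (hGH b hb c hc)⟩⟩
  have hR : C.IsChain R := hC.2.imp_of_mem_imp fun F _ hF _ h => ⟨(hC.1 F hF).2, h⟩
  exact hR.pairwise.imp And.right

theorem schreierChainList_filter_nonempty {l : List (Finset ℕ)}
    (hS : ∀ F ∈ l, IsSchreier F) (hl : l.Pairwise Successive) :
    SchreierChainList (l.filter (·.Nonempty)) := by
  refine ⟨fun F hF => ?_, (hl.sublist List.filter_sublist).isChain⟩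
  simp only [List.mem_filter, decide_eq_true_eq] at hF
  exact ⟨hS F hF.1, hF.2⟩

@[simp]
theorem chainUnion_nil : chainUnion [] = ∅ := rfl

@[simp]
theorem chainUnion_cons (F : Finset ℕ) (l : List (Finset ℕ)) :
    chainUnion (F :: l) = F ∪ chainUnion l := rfl

theorem mem_chainUnion {a : ℕ} {l : List (Finset ℕ)} : a ∈ chainUnion l ↔ ∃ F ∈ l, a ∈ F := by
  induction l with
  | nil => simp
  | cons F l ih => simp [ih]

theorem sum_chainUnion (f : ℕ → ℝ) {l : List (Finset ℕ)} (hl : l.Pairwise Successive) :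
    ∑ a ∈ chainUnion l, f a = (l.map fun F => ∑ a ∈ F, f a).sum := by
  induction l with
  | nil => simp
  | cons F l ih =>
    obtain ⟨hF, hl⟩ := List.pairwise_cons.mp hl
    have hdisj : Disjoint F (chainUnion l) := by
      refine disjoint_left.mpr fun a haF hal => ?_
      obtain ⟨G, hG, haG⟩ := mem_chainUnion.mp hal
      exact lt_irrefl a (hF G hG a haF a haG)
    rw [chainUnion_cons, sum_union hdisj, ih hl, List.map_cons, List.sum_cons]

theorem sum_le_sum_inter_of_subset_chainUnion {f : ℕ → ℝ} (hf : ∀ a, 0 ≤ f a)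
    {A : Finset ℕ} {l : List (Finset ℕ)} (hA : A ⊆ chainUnion l) :
    ∑ a ∈ A, f a ≤ (l.map fun G => ∑ a ∈ G ∩ A, f a).sum := by
  induction l generalizing A with
  | nil => simp [subset_empty.mp hA]
  | cons G l ih =>
    have hAG : A \ G ⊆ chainUnion l := fun a ha =>
      (mem_union.mp (hA (mem_sdiff.mp ha).1)).resolve_left (mem_sdiff.mp ha).2
    have hmono : ∀ H ∈ l, ∑ a ∈ H ∩ (A \ G), f a ≤ ∑ a ∈ H ∩ A, f a := fun H _ =>
      sum_le_sum_of_subset_of_nonneg (inter_subset_inter_left sdiff_subset) fun a _ _ => hf a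
    calc ∑ a ∈ A, f a = ∑ a ∈ G ∩ A, f a + ∑ a ∈ A \ G, f a := by
          rw [inter_comm, sum_inter_add_sum_sdiff]
      _ ≤ ∑ a ∈ G ∩ A, f a + (l.map fun H => ∑ a ∈ H ∩ A, f a).sum :=
          add_le_add le_rfl ((ih hAG).trans (List.sum_le_sum hmono))
      _ = _ := by simp

/-- No Schreier set contains `0`, so a set containing `0` has no cover and `tau1` of it is the
junk value `sInf ∅ = 0`. -/
theorem exists_cover_of_tau1_le {A : Finset ℕ} (hA : ∀ a ∈ A, 0 < a) {c : ℕ} (hc : tau1 A ≤ c) :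
    ∃ D, SchreierChainList D ∧ D.length ≤ c ∧ A ⊆ chainUnion D := by
  have hsingletons : SchreierChainList ((A.sort (· ≤ ·)).map singleton) := by
    refine ⟨fun F hF => ?_, ?_⟩
    · obtain ⟨a, ha, rfl⟩ := List.mem_map.mp hF
      refine ⟨fun _ => ?_, singleton_nonempty a⟩
      simpa [Nat.one_le_iff_ne_zero, pos_iff_ne_zero] using hA a ((mem_sort _).mp ha)
    · refine (List.pairwise_map.mpr ((sortedLT_sort A).pairwise.imp ?_)).isChain
      intro a b hab
      simpa [Successive] using hab
  have hne : {m | ∃ D, SchreierChainList D ∧ D.length = m ∧ A ⊆ chainUnion D}.Nonempty :=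
    ⟨_, _, hsingletons, rfl, fun a ha =>
      mem_chainUnion.mpr ⟨{a}, by simpa using ha, mem_singleton_self a⟩⟩
  obtain ⟨D, hD, hlen, hcov⟩ := Nat.sInf_mem hne
  exact ⟨D, hD, hlen.trans_le hc, hcov⟩

theorem tau1_le_GLindex {M N : Set ℕ} {J : Finset ℕ} (hJ : IsSchreier (subImage N J)) :
    (tau1 (subImage M J) : ℕ∞) ≤ GLindex M N :=
  le_iSup₂ (f := fun J (_ : J ∈ {J : Finset ℕ | IsSchreier (subImage N J)}) =>
    (tau1 (subImage M J) : ℕ∞)) J hJ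

theorem sum_map_rpow_nonneg (p : ℝ) {l : List ℝ} (hl : ∀ a ∈ l, 0 ≤ a) :
    0 ≤ (l.map (· ^ p)).sum :=
  List.sum_nonneg fun b hb => by
    obtain ⟨a, ha, rfl⟩ := List.mem_map.mp hb
    exact Real.rpow_nonneg (hl a ha) p

theorem sum_map_rpow_le_rpow_sum {p : ℝ} (hp : 1 ≤ p) {l : List ℝ} (hl : ∀ a ∈ l, 0 ≤ a) :
    (l.map (· ^ p)).sum ≤ l.sum ^ p := by
  induction l with
  | nil => simp [Real.zero_rpow (by positivity : p ≠ 0)]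
  | cons a l ih =>
    simp only [List.forall_mem_cons] at hl
    calc ((a :: l).map (· ^ p)).sum = a ^ p + (l.map (· ^ p)).sum := by simp
      _ ≤ a ^ p + l.sum ^ p := add_le_add le_rfl (ih hl.2)
      _ ≤ (a + l.sum) ^ p := Real.add_rpow_le_rpow_add hl.1 (List.sum_nonneg hl.2) hp
      _ = (a :: l).sum ^ p := by simp

/-- Every entry is at most `S ^ (1 / p)`, where `S` is the sum of the `p`-th powers. -/
theorem rpow_sum_le_mul_sum_map_rpow {p : ℝ} (hp : 0 < p) {l : List ℝ} (hl : ∀ a ∈ l, 0 ≤ a)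
    {c : ℕ} (hc : l.length ≤ c) : l.sum ^ p ≤ (c : ℝ) ^ p * (l.map (· ^ p)).sum := by
  set S := (l.map (· ^ p)).sum
  have hS : 0 ≤ S := sum_map_rpow_nonneg p hl
  have hentry : ∀ a ∈ l, a ≤ S ^ (1 / p) := fun a ha => by
    have hle : a ^ p ≤ S := List.single_le_sum (fun b hb => by
      obtain ⟨a', ha', rfl⟩ := List.mem_map.mp hb
      exact Real.rpow_nonneg (hl a' ha') p) _ (List.mem_map_of_mem ha)
    calc a = (a ^ p) ^ (1 / p) := by
          rw [← Real.rpow_mul (hl a ha), mul_one_div_cancel hp.ne', Real.rpow_one]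
      _ ≤ S ^ (1 / p) := Real.rpow_le_rpow (Real.rpow_nonneg (hl a ha) p) hle (by positivity)
  have hsum : l.sum ≤ c * S ^ (1 / p) := by
    calc l.sum ≤ l.length • S ^ (1 / p) := List.sum_le_card_nsmul l _ hentry
      _ ≤ c * S ^ (1 / p) := by
        rw [nsmul_eq_mul]; gcongr
  calc l.sum ^ p ≤ (c * S ^ (1 / p)) ^ p := Real.rpow_le_rpow (List.sum_nonneg hl) hsum hp.le
    _ = (c : ℝ) ^ p * S := by
      rw [Real.mul_rpow (by positivity) (by positivity), ← Real.rpow_mul hS,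
        one_div_mul_cancel hp.ne', Real.rpow_one]

theorem sum_map_rpow_sum_abs_nonneg (p : ℝ) (x : ℕ → ℝ) (C : List (Finset ℕ)) :
    0 ≤ (C.map fun F => (∑ n ∈ F, |x n|) ^ p).sum :=
  List.sum_nonneg fun b hb => by
    obtain ⟨F, -, rfl⟩ := List.mem_map.mp hb
    exact Real.rpow_nonneg (sum_nonneg fun n _ => abs_nonneg _) p

theorem betaNorm_nonneg (p : ℝ) (x : ℕ → ℝ) (C : List (Finset ℕ)) : 0 ≤ betaNorm p x C :=
  Real.rpow_nonneg (sum_map_rpow_sum_abs_nonneg p x C) _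

theorem baernsteinNorm_nonneg (p : ℝ) (x : ℕ → ℝ) : 0 ≤ baernsteinNorm p x :=
  Real.sSup_nonneg (by rintro _ ⟨C, -, rfl⟩; exact betaNorm_nonneg p x C)

theorem betaNorm_filter_nonempty {p : ℝ} (hp : p ≠ 0) (x : ℕ → ℝ) (l : List (Finset ℕ)) :
    betaNorm p x (l.filter (·.Nonempty)) = betaNorm p x l := by
  unfold betaNorm
  congr 1
  induction l with
  | nil => rfl
  | cons F l ih =>
    by_cases hF : F.Nonempty
    · simp [hF, ih]
    · simp [ih, not_nonempty_iff_eq_empty.mp hF, Real.zero_rpow hp]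

theorem betaNorm_le_sum_chainUnion {p : ℝ} (hp : 1 ≤ p) (x : ℕ → ℝ) {C : List (Finset ℕ)}
    (hC : C.Pairwise Successive) : betaNorm p x C ≤ ∑ n ∈ chainUnion C, |x n| := by
  have hnonneg : ∀ s ∈ C.map fun F => ∑ n ∈ F, |x n|, 0 ≤ s := fun s hs => by
    obtain ⟨F, -, rfl⟩ := List.mem_map.mp hs
    exact sum_nonneg fun n _ => abs_nonneg _
  have hp0 : 0 < p := by positivity
  calc betaNorm p x C = (((C.map fun F => ∑ n ∈ F, |x n|).map (· ^ p)).sum) ^ (1 / p) := by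
        rw [betaNorm, List.map_map]; rfl
    _ ≤ (((C.map fun F => ∑ n ∈ F, |x n|).sum) ^ p) ^ (1 / p) :=
        Real.rpow_le_rpow (sum_map_rpow_nonneg p hnonneg) (sum_map_rpow_le_rpow_sum hp hnonneg)
          (by positivity)
    _ = ∑ n ∈ chainUnion C, |x n| := by
        rw [← Real.rpow_mul (List.sum_nonneg hnonneg), mul_one_div_cancel hp0.ne', Real.rpow_one,
          sum_chainUnion _ hC]

theorem bddAbove_betaNorm {p : ℝ} (hp : 1 ≤ p) {x : ℕ → ℝ} (S : Finset ℕ)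
    (hx : ∀ n, x n ≠ 0 → n ∈ S) :
    BddAbove {r | ∃ C : List (Finset ℕ), IsSchreierChain C ∧ r = betaNorm p x C} := by
  refine ⟨∑ n ∈ S, |x n|, ?_⟩
  rintro _ ⟨C, hC, rfl⟩
  refine (betaNorm_le_sum_chainUnion hp x hC.2.pairwise).trans ?_
  rw [← sum_filter_ne_zero]
  exact sum_le_sum_of_subset_of_nonneg (fun n hn => hx n (by simpa using (mem_filter.mp hn).2))
    fun n _ _ => abs_nonneg _

theorem betaNorm_le_baernsteinNorm {p : ℝ} (hp : 1 ≤ p) {x : ℕ → ℝ} (S : Finset ℕ)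
    (hx : ∀ n, x n ≠ 0 → n ∈ S) {l : List (Finset ℕ)} (hS : ∀ F ∈ l, IsSchreier F)
    (hl : l.Pairwise Successive) : betaNorm p x l ≤ baernsteinNorm p x := by
  have hp0 : p ≠ 0 := by positivity
  rw [← betaNorm_filter_nonempty hp0]
  by_cases hempty : l.filter (·.Nonempty) = []
  · rw [hempty, betaNorm, List.map_nil, List.sum_nil, Real.zero_rpow (by positivity)]
    exact baernsteinNorm_nonneg p x
  · exact le_csSup (bddAbove_betaNorm hp S hx)
      ⟨_, ⟨hempty, schreierChainList_filter_nonempty hS hl⟩, rfl⟩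

noncomputable def coordVec (e : ℕ → ℕ) {k : ℕ} (α : Fin k → ℝ) : ℕ → ℝ :=
  fun n => ∑ j : Fin k, if e j = n then α j else 0

section coordVec

variable {e f : ℕ → ℕ} {k : ℕ}

theorem coordVec_apply_eq (he : e.Injective) (α : Fin k → ℝ) (j : Fin k) :
    coordVec e α (e j) = α j := by
  simp [coordVec, he.eq_iff, Fin.val_inj]

theorem mem_image_of_coordVec_ne_zero (α : Fin k → ℝ) {n : ℕ} (hn : coordVec e α n ≠ 0) :
    n ∈ univ.image fun j : Fin k => e j := by
  contrapose! hn
  simp_all [coordVec]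

theorem sum_abs_coordVec (he : e.Injective) (α : Fin k → ℝ) (F : Finset ℕ) :
    ∑ n ∈ F, |coordVec e α n| = ∑ j ∈ univ.filter fun j : Fin k => e j ∈ F, |α j| := by
  have hsub : (univ.filter fun j : Fin k => e j ∈ F).image (fun j : Fin k => e j) ⊆ F := by
    simp [subset_iff]
  rw [← sum_subset hsub, sum_image (fun i _ j _ h => Fin.val_injective (he h))]
  · simp only [coordVec_apply_eq he]
  · intro n hnF hn
    by_contra hne
    obtain ⟨j, -, rfl⟩ := mem_image.mp (mem_image_of_coordVec_ne_zero α (abs_ne_zero.mp hne))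
    exact hn (mem_image_of_mem _ (mem_filter.mpr ⟨mem_univ j, hnF⟩))

def indexSet (e : ℕ → ℕ) (k : ℕ) (F : Finset ℕ) : Finset ℕ := (range k).filter (e · ∈ F)

theorem image_indexSet_subset (F : Finset ℕ) : (indexSet e k F).image e ⊆ F := fun _ hn => by
  obtain ⟨j, hj, rfl⟩ := mem_image.mp hn
  exact (mem_filter.mp hj).2

theorem sum_abs_coordVec_image_indexSet (he : e.Injective) (hf : f.Injective) (α : Fin k → ℝ)
    (F : Finset ℕ) :
    ∑ n ∈ (indexSet f k F).image e, |coordVec e α n| = ∑ n ∈ F, |coordVec f α n| := by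
  rw [sum_abs_coordVec he, sum_abs_coordVec hf]
  congr 1
  ext j
  simp [indexSet, he.eq_iff]

theorem Successive.image_indexSet (he : StrictMono e) (hf : StrictMono f) {F G : Finset ℕ}
    (h : Successive F G) : Successive ((indexSet f k F).image e) ((indexSet f k G).image e) := by
  simp only [Successive, indexSet, mem_image, mem_filter]
  rintro _ ⟨i, ⟨-, hi⟩, rfl⟩ _ ⟨j, ⟨-, hj⟩, rfl⟩
  exact he (hf.lt_iff_lt.mp (h _ hi _ hj))

end coordVec

theorem betaNorm_le_mul_betaNorm_flatMap {p : ℝ} (hp : 0 < p) {x y : ℕ → ℝ}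
    {C : List (Finset ℕ)} (blocks : Finset ℕ → List (Finset ℕ)) {c : ℕ}
    (hlen : ∀ F ∈ C, (blocks F).length ≤ c)
    (hsum : ∀ F ∈ C, ∑ n ∈ F, |x n| ≤ ((blocks F).map fun G => ∑ m ∈ G, |y m|).sum) :
    betaNorm p x C ≤ c * betaNorm p y (C.flatMap blocks) := by
  have hblock : ∀ F ∈ C, (∑ n ∈ F, |x n|) ^ p ≤
      (c : ℝ) ^ p * ((blocks F).map fun G => (∑ m ∈ G, |y m|) ^ p).sum := fun F hF => by
    have hnonneg : ∀ s ∈ (blocks F).map fun G => ∑ m ∈ G, |y m|, 0 ≤ s := fun s hs => by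
      obtain ⟨G, -, rfl⟩ := List.mem_map.mp hs
      exact sum_nonneg fun m _ => abs_nonneg _
    calc (∑ n ∈ F, |x n|) ^ p ≤ (((blocks F).map fun G => ∑ m ∈ G, |y m|).sum) ^ p :=
          Real.rpow_le_rpow (sum_nonneg fun n _ => abs_nonneg _) (hsum F hF) hp.le
      _ ≤ (c : ℝ) ^ p * (((blocks F).map fun G => ∑ m ∈ G, |y m|).map (· ^ p)).sum :=
          rpow_sum_le_mul_sum_map_rpow hp hnonneg (by simpa using hlen F hF)
      _ = (c : ℝ) ^ p * ((blocks F).map fun G => (∑ m ∈ G, |y m|) ^ p).sum := by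
          rw [List.map_map]; rfl
  have hsum_flatMap : (C.map fun F => ((blocks F).map fun G => (∑ m ∈ G, |y m|) ^ p).sum).sum =
      ((C.flatMap blocks).map fun G => (∑ m ∈ G, |y m|) ^ p).sum := by
    simp [List.flatMap, List.sum_flatten, List.map_flatten, Function.comp_def]
  calc betaNorm p x C = ((C.map fun F => (∑ n ∈ F, |x n|) ^ p).sum) ^ (1 / p) := rfl
    _ ≤ ((C.map fun F => (c : ℝ) ^ p *
          ((blocks F).map fun G => (∑ m ∈ G, |y m|) ^ p).sum).sum) ^ (1 / p) :=
        Real.rpow_le_rpow (sum_map_rpow_sum_abs_nonneg p x C) (List.sum_le_sum hblock)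
          (by positivity)
    _ = ((c : ℝ) ^ p * ((C.flatMap blocks).map fun G => (∑ m ∈ G, |y m|) ^ p).sum) ^ (1 / p) := by
        rw [List.sum_map_mul_left, hsum_flatMap]
    _ = c * betaNorm p y (C.flatMap blocks) := by
        rw [Real.mul_rpow (by positivity) (sum_map_rpow_sum_abs_nonneg p y _),
          ← Real.rpow_mul (Nat.cast_nonneg c),
          mul_one_div_cancel hp.ne', Real.rpow_one]
        rfl

theorem betaNorm_coordVec_le_mul_baernsteinNorm {p : ℝ} (hp : 1 ≤ p) {M N : Set ℕ}
    (hM : M.Infinite) (hN : N.Infinite) (hMpos : ∀ m ∈ M, 0 < m) {c : ℕ}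
    (hGL : GLindex M N ≤ c) {k : ℕ} (α : Fin k → ℝ) {C : List (Finset ℕ)}
    (hC : SchreierChainList C) :
    betaNorm p (coordVec (enumSet N) α) C ≤ c * baernsteinNorm p (coordVec (enumSet M) α) := by
  have heM : StrictMono (enumSet M) := Nat.nth_strictMono hM
  have heN : StrictMono (enumSet N) := Nat.nth_strictMono hN
  set A : Finset ℕ → Finset ℕ := fun F => (indexSet (enumSet N) k F).image (enumSet M)
  have hcover : ∀ F ∈ C, ∃ D, SchreierChainList D ∧ D.length ≤ c ∧ A F ⊆ chainUnion D := by
    intro F hF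
    refine exists_cover_of_tau1_le (fun m hm => ?_) ?_
    · obtain ⟨j, -, rfl⟩ := mem_image.mp hm
      exact hMpos _ (Nat.nth_mem_of_infinite hM j)
    · have hJ := (hC.1 F hF).1.mono (image_indexSet_subset (e := enumSet N) (k := k) F)
      exact_mod_cast (tau1_le_GLindex (M := M) hJ).trans hGL
  choose! D hD hDlen hDcover using hcover
  have hblocks_schreier : ∀ G ∈ C.flatMap fun F => (D F).map (· ∩ A F), IsSchreier G := by
    intro G hG
    obtain ⟨F, hF, hG⟩ := List.mem_flatMap.mp hG
    obtain ⟨H, hH, rfl⟩ := List.mem_map.mp hG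
    exact ((hD F hF).1 H hH).1.mono inter_subset_left
  have hblocks_pairwise : (C.flatMap fun F => (D F).map (· ∩ A F)).Pairwise Successive := by
    refine List.pairwise_flatMap.mpr ⟨fun F hF => ?_, hC.pairwise.imp fun hFG G hG G' hG' => ?_⟩
    · exact List.pairwise_map.mpr ((hD F hF).pairwise.imp fun h =>
        h.mono inter_subset_left inter_subset_left)
    · obtain ⟨H, -, rfl⟩ := List.mem_map.mp hG
      obtain ⟨H', -, rfl⟩ := List.mem_map.mp hG'
      exact (hFG.image_indexSet heM heN).mono inter_subset_right inter_subset_right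
  have hy : betaNorm p (coordVec (enumSet M) α) (C.flatMap fun F => (D F).map (· ∩ A F)) ≤
      baernsteinNorm p (coordVec (enumSet M) α) :=
    betaNorm_le_baernsteinNorm hp _ (fun n => mem_image_of_coordVec_ne_zero α) hblocks_schreier
      hblocks_pairwise
  refine (betaNorm_le_mul_betaNorm_flatMap (by positivity) _ (fun F hF => ?_)
    (fun F hF => ?_)).trans (mul_le_mul_of_nonneg_left hy c.cast_nonneg)
  · simpa using hDlen F hF
  · rw [← sum_abs_coordVec_image_indexSet heM.injective heN.injective, List.map_map]
    exact sum_le_sum_inter_of_subset_chainUnion (fun _ => abs_nonneg _) (hDcover F hF)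

theorem baernstein_domination_of_GLindex_general (p : ℝ) (hp : 1 < p) (M N : Set ℕ)
    (hM : M.Infinite) (hN : N.Infinite)
    (hMpos : ∀ m ∈ M, 0 < m)
    (C : ℕ) (hGL : GLindex M N = (C : ℕ∞)) (k : ℕ) (α : Fin k → ℝ) :
    baernsteinNorm p (fun n => ∑ j : Fin k, if enumSet N (j : ℕ) = n then α j else 0) ≤
      (C : ℝ) *
        baernsteinNorm p (fun n => ∑ j : Fin k, if enumSet M (j : ℕ) = n then α j else 0) := by
  refine Real.sSup_le ?_ (mul_nonneg C.cast_nonneg (baernsteinNorm_nonneg _ _))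
  rintro _ ⟨Cx, hCx, rfl⟩
  exact betaNorm_coordVec_le_mul_baernsteinNorm hp.le hM hN hMpos hGL.le α hCx.2

/-- If ΓL₁(M, N) = C < ∞, then (e_m)_{m∈M} C-dominates (e_n)_{n∈N} in the Baernstein norm. -/
theorem baernstein_domination_of_GLindex (p : ℝ) (hp : 1 < p) (M N : Set ℕ)
    (hM : M.Infinite) (hN : N.Infinite)
    (hMpos : ∀ m ∈ M, 0 < m) (hNpos : ∀ n ∈ N, 0 < n)
    (C : ℕ) (hGL : GLindex M N = (C : ℕ∞)) (k : ℕ) (α : Fin k → ℝ) :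
    baernsteinNorm p (fun n => ∑ j : Fin k, if enumSet N (j : ℕ) = n then α j else 0) ≤
      (C : ℝ) *
        baernsteinNorm p (fun n => ∑ j : Fin k, if enumSet M (j : ℕ) = n then α j else 0) :=
  baernstein_domination_of_GLindex_general p hp M N hM hN hMpos C hGL k α
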